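/- If GL does not prove A and GL does not prove ⋀Rf(□A) → ¬□A, then there is a transitive irreflexive Kripke model with root r* such that r* forces ◇^n⊤ for all n, r* forces □□A, and r* does not force □A. Consequently GL_ω does not prove □□A → □A. -/

import Mathlib

/-!
Kripke completeness of GL, proved with a finite canonical model, gives transitive conversely
well-founded models with a world `d ⊩ □A ∧ ¬A` and a world `e ⊩ ⋀Rf(□A) ∧ □A`. Cut both models
down to their worlds forcing `□A`, place them side by side together with an infinite descending
chain of copies of `e`, each seeing the chain below it and the strict successors of `e`, and put a
new root `r*` below everything. The reflection principles `□C → C` at `e` make every copy of `e`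
agree with `e` on the subformulas of `□A`, so `r* ⊩ □□A`, while `r* ⊮ □A` because `r*` sees `d`.
The chain gives `r*` successors of every depth, so `r* ⊩ ◇ⁿ⊤` for all `n`; as the merged model is
still transitive and conversely well-founded, GL_ω is sound at `r*`, and `□□A → □A` fails there.
-/

/-- Modal propositional formulas (variables are indexed by `ℕ`). -/
inductive MF : Type
  | var : ℕ → MF
  | fal : MF
  | imp : MF → MF → MF
  | box : MF → MF
deriving DecidableEq

namespace MF

def neg (A : MF) : MF := imp A fal
def top : MF := neg fal
def conj (A B : MF) : MF := neg (imp A (neg B))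
def disj (A B : MF) : MF := imp (neg A) B
def biimp (A B : MF) : MF := conj (imp A B) (imp B A)
def dia (A : MF) : MF := neg (box (neg A))
def boxn : ℕ → MF → MF
  | 0, A => A
  | n+1, A => box (boxn n A)
def dian (n : ℕ) (A : MF) : MF := neg (boxn n (neg A))

/-- Uniform substitution. -/
def subst (s : ℕ → MF) : MF → MF
  | var n => s n
  | fal => fal
  | imp A B => imp (subst s A) (subst s B)
  | box A => box (subst s A)

/-- The set of subformulas. -/
def subF : MF → Finset MF
  | var n => {var n}
  | fal => {fal}
  | imp A B => insert (imp A B) (subF A ∪ subF B)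
  | box A => insert (box A) (subF A)

def isBox : MF → Bool
  | box _ => true
  | _ => false

def unbox : MF → MF
  | box A => A
  | A => A

/-- `cx A` is the number of subformulas of `A` of the form `□C`. -/
def cx (A : MF) : ℕ := ((subF A).filter (fun B => isBox B = true)).card

/-- `Rf(A) = {□B → B : □B ∈ Sub(A)}`. -/
def RfSet (A : MF) : Finset MF :=
  ((subF A).filter (fun B => isBox B = true)).image (fun B => imp B (unbox B))

/-- Conjunction of a finite set of formulas. -/
noncomputable def conjFin (s : Finset MF) : MF := s.toList.foldr conj top

/-- `A` is an instance of a propositional tautology. -/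
def TautInst (A : MF) : Prop :=
  ∀ v : MF → Bool, (∀ B C, v (imp B C) = (!(v B) || v C)) → v fal = false → v A = true

end MF

/-- Provability in the Gödel–Löb logic GL. -/
inductive GLPrv : MF → Prop
  | taut {A} : MF.TautInst A → GLPrv A
  | k (A B : MF) : GLPrv (MF.imp (MF.box (MF.imp A B)) (MF.imp (MF.box A) (MF.box B)))
  | lob (A : MF) : GLPrv (MF.imp (MF.box (MF.imp (MF.box A) A)) (MF.box A))
  | mp {A B} : GLPrv (MF.imp A B) → GLPrv A → GLPrv B
  | nec {A} : GLPrv A → GLPrv (MF.box A)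

/-- Provability in GL + Γ: axioms are GL-theorems and substitution instances of
formulas in Γ; rules are modus ponens (and substitution, built into the axiom rule). -/
inductive ExtPrv (Ax : Set MF) : MF → Prop
  | gl {A} : GLPrv A → ExtPrv Ax A
  | ax {A} (s : ℕ → MF) : A ∈ Ax → ExtPrv Ax (A.subst s)
  | mp {A B} : ExtPrv Ax (MF.imp A B) → ExtPrv Ax A → ExtPrv Ax B

/-- GL_ω = GL + {◇ⁿ⊤ : n ∈ ω}. -/
def GLomegaPrv : MF → Prop := ExtPrv (Set.range fun n => MF.dian n MF.top)

/-- GLS = GL + {□p → p}. -/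
def GLSPrv : MF → Prop := ExtPrv {MF.imp (MF.box (MF.var 0)) (MF.var 0)}

/-- F_s = □^{s+1}⊥ → □^s⊥. -/
def Fmla (s : ℕ) : MF := MF.imp (MF.boxn (s+1) MF.fal) (MF.boxn s MF.fal)

/-- GL + {¬F_s}. -/
def GLFPrv (s : ℕ) : MF → Prop := ExtPrv {MF.neg (Fmla s)}

/-- A Kripke model for modal logic. -/
structure KModel where
  W : Type
  R : W → W → Prop
  val : W → ℕ → Prop

/-- The forcing relation. -/
def KModel.force (M : KModel) : M.W → MF → Prop
  | w, MF.var n => M.val w n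
  | _, MF.fal => False
  | w, MF.imp A B => M.force w A → M.force w B
  | w, MF.box A => ∀ v, M.R w v → M.force v A

namespace MF

theorem mem_subF_self (A : MF) : A ∈ subF A := by
  cases A <;> simp [subF]

theorem subF_subset_of_mem {A B : MF} (h : B ∈ subF A) : subF B ⊆ subF A := by
  induction A with
  | var n => simp only [subF, Finset.mem_singleton] at h; rw [h]
  | fal => simp only [subF, Finset.mem_singleton] at h; rw [h]
  | imp C D ihC ihD =>
    simp only [subF, Finset.mem_insert, Finset.mem_union] at h
    rcases h with rfl | h | h
    · exact subset_rfl
    · exact (ihC h).trans (by simp [subF, Finset.subset_iff]; tauto)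
    · exact (ihD h).trans (by simp [subF, Finset.subset_iff]; tauto)
  | box C ihC =>
    simp only [subF, Finset.mem_insert] at h
    rcases h with rfl | h
    · exact subset_rfl
    · exact (ihC h).trans (Finset.subset_insert _ _)

theorem mem_subF_of_imp {A C D : MF} (h : imp C D ∈ subF A) :
    C ∈ subF A ∧ D ∈ subF A :=
  ⟨subF_subset_of_mem h (by simp [subF, mem_subF_self]),
    subF_subset_of_mem h (by simp [subF, mem_subF_self])⟩

theorem mem_subF_of_box {A C : MF} (h : box C ∈ subF A) : C ∈ subF A :=
  subF_subset_of_mem h (by simp [subF, mem_subF_self])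

theorem mem_RfSet {A C : MF} (h : box C ∈ subF A) : imp (box C) C ∈ RfSet A :=
  Finset.mem_image.2 ⟨box C, Finset.mem_filter.2 ⟨h, rfl⟩, rfl⟩

/-- The finite set of formulas over which the canonical countermodel of `G` is built. -/
def closure (G : MF) : Finset MF := subF G ∪ (subF G).image neg

theorem mem_closure_of_mem_subF {G B : MF} (h : B ∈ subF G) : B ∈ G.closure :=
  Finset.mem_union_left _ h

theorem neg_mem_closure {G B : MF} (h : B ∈ subF G) : neg B ∈ G.closure :=
  Finset.mem_union_right _ (Finset.mem_image_of_mem neg h)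

theorem box_mem_subF_of_mem_closure {G B : MF} (h : box B ∈ G.closure) : box B ∈ subF G := by
  simpa [closure, neg] using h

theorem subst_dian_top (s : ℕ → MF) (n : ℕ) : (dian n top).subst s = dian n top := by
  have hboxn : ∀ k C, (boxn k C).subst s = boxn k (C.subst s) := by
    intro k C
    induction k with
    | zero => rfl
    | succ k ih => simp [boxn, subst, ih]
  simp [dian, neg, top, subst, hboxn]

end MF

open MF

namespace GLPrv

variable {A B C X : MF}

theorem imp_refl (A : MF) : GLPrv (imp A A) :=
  taut fun v hv _ => by simp only [hv]; cases v A <;> rfl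

theorem verum : GLPrv top :=
  taut fun v hv hf => by simp only [top, neg, hv, hf]; rfl

theorem weaken (A : MF) (h : GLPrv B) : GLPrv (imp A B) :=
  mp (taut fun v hv _ => by simp only [hv]; cases v A <;> cases v B <;> rfl) h

theorem imp_trans (h₁ : GLPrv (imp A B)) (h₂ : GLPrv (imp B C)) : GLPrv (imp A C) :=
  mp (mp (taut fun v hv _ => by
    simp only [hv]; cases v A <;> cases v B <;> cases v C <;> rfl) h₁) h₂

theorem mp_imp (h₁ : GLPrv (imp X (imp A B))) (h₂ : GLPrv (imp X A)) : GLPrv (imp X B) :=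
  mp (mp (taut fun v hv _ => by
    simp only [hv]; cases v X <;> cases v A <;> cases v B <;> rfl) h₁) h₂

theorem imp_conj (h₁ : GLPrv (imp C A)) (h₂ : GLPrv (imp C B)) : GLPrv (imp C (conj A B)) :=
  mp (mp (taut fun v hv hf => by
    simp only [conj, neg, hv, hf]; cases v A <;> cases v B <;> cases v C <;> rfl) h₁) h₂

theorem conj_left (A B : MF) : GLPrv (imp (conj A B) A) :=
  taut fun v hv hf => by simp only [conj, neg, hv, hf]; cases v A <;> cases v B <;> rfl

theorem conj_right (A B : MF) : GLPrv (imp (conj A B) B) :=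
  taut fun v hv hf => by simp only [conj, neg, hv, hf]; cases v A <;> cases v B <;> rfl

theorem box_mono (h : GLPrv (imp A B)) : GLPrv (imp (box A) (box B)) :=
  mp (k A B) (nec h)

theorem box_conj (A B : MF) : GLPrv (imp (conj (box A) (box B)) (box (conj A B))) := by
  have hpair : GLPrv (imp (box A) (imp (box B) (box (conj A B)))) :=
    imp_trans (box_mono (taut fun v hv hf => by
      simp only [conj, neg, hv, hf]; cases v A <;> cases v B <;> rfl)) (k _ _)
  exact mp_imp (imp_trans (conj_left _ _) hpair) (conj_right _ _)

theorem imp_imp_conj (h : GLPrv (imp B C)) : GLPrv (imp A (imp B (conj A C))) :=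
  mp (taut fun v hv hf => by
    simp only [conj, neg, hv, hf]; cases v A <;> cases v B <;> cases v C <;> rfl) h

/-- Axiom 4 is derivable: apply Löb's axiom to `A ∧ □A`. -/
theorem box_box (A : MF) : GLPrv (imp (box A) (box (box A))) :=
  imp_trans (imp_trans (box_mono (imp_imp_conj (box_mono (conj_left A (box A))))) (lob _))
    (box_mono (conj_right _ _))

theorem of_box_imp_self (h : GLPrv (imp (box A) A)) : GLPrv A :=
  mp h (mp (lob A) (nec h))

theorem imp_foldr_conj_iff {l : List MF} :
    GLPrv (imp C (l.foldr conj top)) ↔ ∀ x ∈ l, GLPrv (imp C x) := by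
  induction l with
  | nil => simpa using weaken C verum
  | cons a l ih =>
    simp only [List.foldr_cons, List.forall_mem_cons, ← ih]
    exact ⟨fun h => ⟨imp_trans h (conj_left _ _), imp_trans h (conj_right _ _)⟩,
      fun h => imp_conj h.1 h.2⟩

theorem imp_box_foldr_conj {l : List MF} (h : ∀ x ∈ l, GLPrv (imp C (box x))) :
    GLPrv (imp C (box (l.foldr conj top))) := by
  induction l with
  | nil => exact weaken C (nec verum)
  | cons a l ih =>
    simp only [List.forall_mem_cons] at h
    exact imp_trans (imp_conj h.1 (ih h.2)) (box_conj _ _)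

end GLPrv

def Derivable (s : Finset MF) (B : MF) : Prop := GLPrv (imp (conjFin s) B)

namespace Derivable

variable {s t : Finset MF} {B C x : MF}

theorem mem (h : B ∈ s) : Derivable s B :=
  GLPrv.imp_foldr_conj_iff.1 (GLPrv.imp_refl _) B (Finset.mem_toList.2 h)

theorem mp (h₁ : Derivable s (imp B C)) (h₂ : Derivable s B) : Derivable s C :=
  GLPrv.mp_imp h₁ h₂

theorem of_imp (h : GLPrv (imp B C)) (hB : Derivable s B) : Derivable s C :=
  GLPrv.imp_trans hB h

theorem imp_of_insert (h : Derivable (insert x s) B) : Derivable s (imp x B) := by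
  have hins : GLPrv (imp (conj x (conjFin s)) (conjFin (insert x s))) :=
    GLPrv.imp_foldr_conj_iff.2 fun y hy => by
      rcases Finset.mem_insert.1 (Finset.mem_toList.1 hy) with rfl | hy
      · exact GLPrv.conj_left _ _
      · exact GLPrv.imp_trans (GLPrv.conj_right _ _) (mem hy)
  refine GLPrv.mp (GLPrv.taut fun v hv hf => ?_) (GLPrv.imp_trans hins h)
  simp only [conj, neg, hv, hf]
  cases v x <;> cases v (conjFin s) <;> cases v B <;> rfl

theorem box_conjFin (h : ∀ y ∈ t, Derivable s (box y)) : Derivable s (box (conjFin t)) :=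
  GLPrv.imp_box_foldr_conj fun y hy => h y (Finset.mem_toList.1 hy)

end Derivable

def Consistent (s : Finset MF) : Prop := ¬ Derivable s fal

def IsMaxConsistent (P m : Finset MF) : Prop := Maximal (fun t => t ⊆ P ∧ Consistent t) m

theorem exists_isMaxConsistent {P s : Finset MF} (hs : s ⊆ P) (hc : Consistent s) :
    ∃ m, s ⊆ m ∧ IsMaxConsistent P m :=
  Set.Finite.exists_le_maximal (s := {t | t ⊆ P ∧ Consistent t})
    (P.powerset.finite_toSet.subset fun _ ht => Finset.mem_powerset.2 ht.1) ⟨hs, hc⟩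

namespace IsMaxConsistent

variable {P m : Finset MF} {B C : MF}

theorem consistent (hm : IsMaxConsistent P m) : Consistent m := hm.prop.2

theorem not_consistent_insert (hm : IsMaxConsistent P m) (hB : B ∈ P) (hBm : B ∉ m) :
    ¬ Consistent (insert B m) := fun hc =>
  hBm (hm.le_of_ge ⟨Finset.insert_subset hB hm.prop.1, hc⟩ (Finset.subset_insert _ _)
    (Finset.mem_insert_self _ _))

theorem mem_of_derivable (hm : IsMaxConsistent P m) (hB : B ∈ P) (hd : Derivable m B) : B ∈ m := by
  by_contra hBm
  exact hm.not_consistent_insert hB hBm fun hfal => hm.consistent (hfal.imp_of_insert.mp hd)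

theorem derivable_imp_of_not_mem (hm : IsMaxConsistent P m) (hC : C ∈ P) (hCm : C ∉ m) (D : MF) :
    Derivable m (imp C D) := by
  have hder : Derivable (insert C m) fal := not_not.1 (hm.not_consistent_insert hC hCm)
  refine Derivable.of_imp (GLPrv.taut fun v hv hf => ?_) hder.imp_of_insert
  simp only [hv, hf]; cases v C <;> cases v D <;> rfl

end IsMaxConsistent

def CanWorld (G : MF) : Type := {m : Finset MF // IsMaxConsistent G.closure m}

namespace CanWorld

variable {G : MF}

/-- Requiring a new box in every successor makes the relation irreflexive, hence conversely
well-founded on the finitely many worlds. -/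
def R (m m' : CanWorld G) : Prop :=
  (∀ C, box C ∈ m.1 → C ∈ m'.1 ∧ box C ∈ m'.1) ∧ ∃ C, box C ∈ m'.1 ∧ box C ∉ m.1

theorem R_trans : Transitive (R (G := G)) := by
  rintro a b c ⟨hab, -⟩ ⟨hbc, C, hCc, hCb⟩
  exact ⟨fun D hD => hbc D (hab D hD).2, C, hCc, fun hCa => hCb (hab C hCa).2⟩

theorem R_irrefl : Irreflexive (R (G := G)) := by
  rintro a ⟨-, C, hCa, hCa'⟩
  exact hCa' hCa

instance : Finite (CanWorld G) :=
  Finite.of_injective (fun m : CanWorld G => (⟨m.1, Finset.mem_powerset.2 m.2.prop.1⟩ :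
    G.closure.powerset)) fun _ _ h => Subtype.ext (congrArg Subtype.val h :)

theorem wellFounded_flip_R : WellFounded (flip (R (G := G))) :=
  haveI : IsTrans (CanWorld G) (flip R) := ⟨fun _ _ _ h₁ h₂ => R_trans h₂ h₁⟩
  haveI : Std.Irrefl (flip (R (G := G))) := ⟨R_irrefl⟩
  Finite.wellFounded_of_trans_of_irrefl _

/-- Löb's axiom is what makes `{□B, ¬B} ∪ {C, □C : □C ∈ m}` consistent. -/
theorem exists_R_not_mem (m : CanWorld G) {B : MF} (hB : box B ∈ subF G) (hBm : box B ∉ m.1) :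
    ∃ m', R m m' ∧ B ∉ m'.1 := by
  set unboxed := m.1.preimage box fun _ _ _ _ h => box.inj h
  set T := unboxed ∪ unboxed.image box
  have hunboxed : ∀ {C}, C ∈ unboxed ↔ box C ∈ m.1 := Finset.mem_preimage
  have hT : T ⊆ G.closure := by
    intro C hC
    rcases Finset.mem_union.1 hC with hC | hC
    · exact mem_closure_of_mem_subF
        (mem_subF_of_box (box_mem_subF_of_mem_closure (m.2.prop.1 (hunboxed.1 hC))))
    · obtain ⟨D, hD, rfl⟩ := Finset.mem_image.1 hC
      exact m.2.prop.1 (hunboxed.1 hD)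
  have hcon : Consistent (insert (box B) (insert (neg B) T)) := by
    intro hder
    have hT_lob : Derivable T (imp (box B) B) :=
      Derivable.of_imp (GLPrv.taut fun v hv hf => by
          simp only [neg, hv, hf]; cases v B <;> cases v (box B) <;> rfl)
        hder.imp_of_insert.imp_of_insert
    have hm_boxT : Derivable m.1 (box (conjFin T)) := Derivable.box_conjFin fun C hC => by
      rcases Finset.mem_union.1 hC with hC | hC
      · exact Derivable.mem (hunboxed.1 hC)
      · obtain ⟨D, hD, rfl⟩ := Finset.mem_image.1 hC
        exact Derivable.of_imp (GLPrv.box_box D) (Derivable.mem (hunboxed.1 hD))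
    exact hBm (m.2.mem_of_derivable (mem_closure_of_mem_subF hB)
      (Derivable.of_imp (GLPrv.imp_trans (GLPrv.box_mono hT_lob) (GLPrv.lob B)) hm_boxT))
  obtain ⟨m', hsub, hm'⟩ := exists_isMaxConsistent
    (Finset.insert_subset (mem_closure_of_mem_subF hB)
      (Finset.insert_subset (neg_mem_closure (mem_subF_of_box hB)) hT)) hcon
  have hTm' : T ⊆ m' := fun C hC => hsub (by simp [hC])
  refine ⟨⟨m', hm'⟩, ⟨fun C hC => ⟨hTm' ?_, hTm' ?_⟩, B, hsub (by simp), hBm⟩, fun hB' => ?_⟩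
  · exact Finset.mem_union_left _ (hunboxed.2 hC)
  · exact Finset.mem_union_right _ (Finset.mem_image_of_mem box (hunboxed.2 hC))
  · have hnegB : neg B ∈ m' := hsub (Finset.mem_insert_of_mem (Finset.mem_insert_self _ _))
    exact hm'.consistent (Derivable.mp (Derivable.mem hnegB) (Derivable.mem hB'))

end CanWorld

def canonicalModel (G : MF) : KModel := ⟨CanWorld G, CanWorld.R, fun m n => var n ∈ m.1⟩

theorem canonicalModel_force_iff {G B : MF} (hB : B ∈ subF G) (m : CanWorld G) :
    (canonicalModel G).force m B ↔ B ∈ m.1 := by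
  induction B generalizing m with
  | var n => rfl
  | fal => exact ⟨False.elim, fun h => m.2.consistent (Derivable.mem h)⟩
  | imp C D ihC ihD =>
    obtain ⟨hC, hD⟩ := mem_subF_of_imp hB
    have hCD := mem_closure_of_mem_subF hB
    change ((canonicalModel G).force m C → (canonicalModel G).force m D) ↔ _
    rw [ihC hC, ihD hD]
    refine ⟨fun h => m.2.mem_of_derivable hCD ?_, fun h hCm => m.2.mem_of_derivable
      (mem_closure_of_mem_subF hD) (Derivable.mp (Derivable.mem h) (Derivable.mem hCm))⟩
    by_cases hCm : C ∈ m.1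
    · exact Derivable.of_imp (GLPrv.taut fun v hv _ => by
        simp only [hv]; cases v C <;> cases v D <;> rfl) (Derivable.mem (h hCm))
    · exact m.2.derivable_imp_of_not_mem (mem_closure_of_mem_subF hC) hCm D
  | box C ih =>
    have hC := mem_subF_of_box hB
    refine ⟨fun h => ?_, fun h m' hR => (ih hC m').2 (hR.1 C h).1⟩
    by_contra hCm
    obtain ⟨m', hR, hCm'⟩ := m.exists_R_not_mem hB hCm
    exact hCm' ((ih hC m').1 (h m' hR))

theorem exists_countermodel {G : MF} (hG : ¬ GLPrv G) :
    ∃ (M : KModel) (w : M.W), Transitive M.R ∧ WellFounded (flip M.R) ∧ ¬ M.force w G := by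
  have hcon : Consistent {neg G} := fun h => by
    have hneg : GLPrv (imp (neg G) (conjFin {neg G})) := GLPrv.imp_foldr_conj_iff.2 fun x hx => by
      rw [Finset.mem_toList, Finset.mem_singleton] at hx
      exact hx ▸ GLPrv.imp_refl _
    refine hG (GLPrv.mp (GLPrv.taut fun v hv hf => ?_) (GLPrv.imp_trans hneg h))
    simp only [neg, hv, hf]; cases v G <;> rfl
  obtain ⟨m, hsub, hm⟩ := exists_isMaxConsistent (Finset.singleton_subset_iff.2
    (neg_mem_closure (mem_subF_self G))) hcon
  refine ⟨canonicalModel G, ⟨m, hm⟩, CanWorld.R_trans, CanWorld.wellFounded_flip_R, fun h => ?_⟩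
  exact hm.consistent (Derivable.mp (Derivable.mem (hsub (Finset.mem_singleton_self _)))
    (Derivable.mem ((canonicalModel_force_iff (mem_subF_self G) ⟨m, hm⟩).1 h)))

namespace KModel

variable {M : KModel} {w v : M.W} {A B : MF}

theorem force_conj : M.force w (conj A B) ↔ M.force w A ∧ M.force w B := by
  simp only [conj, neg, force]
  tauto

theorem force_of_mem_conjFin {s : Finset MF} (h : M.force w (conjFin s)) (hA : A ∈ s) :
    M.force w A := by
  have hlist : ∀ l : List MF, M.force w (l.foldr conj top) → A ∈ l → M.force w A := by
    intro l
    induction l with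
    | nil => simp
    | cons a l ih =>
      simp only [List.foldr_cons, force_conj, List.mem_cons]
      rintro ⟨ha, hl⟩ (rfl | hA)
      exacts [ha, ih hl hA]
  exact hlist _ h (Finset.mem_toList.2 hA)

theorem force_of_tautInst (h : TautInst A) : M.force w A := by
  classical
  simpa using h (fun B => decide (M.force w B)) (fun B C => by
    by_cases hB : M.force w B <;> by_cases hC : M.force w C <;> simp [force, hB, hC])
    (decide_eq_false id)

theorem force_lob (ht : Transitive M.R) (hwf : WellFounded (flip M.R)) (A : MF) (w : M.W) :
    M.force w (imp (box (imp (box A) A)) (box A)) := by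
  intro h v hv
  induction v using hwf.induction with
  | _ v ih => exact h v hv fun u hu => ih u hu (ht hv hu)

theorem force_box_of_R (ht : Transitive M.R) (h : M.force v (box A)) (hR : M.R v w) :
    M.force w (box A) :=
  fun u hu => h u (ht hR hu)

theorem force_dian_zero_top (w : M.W) : M.force w (dian 0 top) :=
  fun h => h id

theorem force_dian_succ_top {n : ℕ} (hR : M.R w v) (h : M.force v (dian n top)) :
    M.force w (dian (n + 1) top) :=
  fun hbox => h (hbox v hR)

end KModel

theorem GLPrv.sound {M : KModel} (ht : Transitive M.R) (hwf : WellFounded (flip M.R)) {A : MF}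
    (h : GLPrv A) (w : M.W) : M.force w A := by
  induction h generalizing w with
  | taut h => exact KModel.force_of_tautInst h
  | k A B => exact fun hAB hA v hv => hAB v hv (hA v hv)
  | lob A => exact KModel.force_lob ht hwf A w
  | mp _ _ ih₁ ih₂ => exact ih₁ w (ih₂ w)
  | nec _ ih => exact fun v _ => ih v

theorem GLomegaPrv.sound {M : KModel} (ht : Transitive M.R) (hwf : WellFounded (flip M.R))
    {w : M.W} (hdia : ∀ n, M.force w (dian n top)) {A : MF} (h : GLomegaPrv A) :
    M.force w A := by
  induction h with
  | gl h => exact h.sound ht hwf w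
  | ax s hA =>
    obtain ⟨n, rfl⟩ := hA
    rw [subst_dian_top]
    exact hdia n
  | mp _ _ ih₁ ih₂ => exact ih₁ ih₂

namespace KModel

def restrict (M : KModel) (S : Set M.W) : KModel := ⟨S, fun v w => M.R v w, fun w => M.val w⟩

variable {M : KModel} {S : Set M.W}

theorem force_restrict (hS : ∀ v w, v ∈ S → M.R v w → w ∈ S) (B : MF) (w : S) :
    (M.restrict S).force w B ↔ M.force w B := by
  induction B generalizing w with
  | var n => rfl
  | fal => rfl
  | imp C D ihC ihD => exact imp_congr (ihC w) (ihD w)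
  | box C ih =>
    exact ⟨fun h v hv => (ih ⟨v, hS _ _ w.2 hv⟩).1 (h _ hv), fun h v hv => (ih v).2 (h v.1 hv)⟩

theorem transitive_restrict (ht : Transitive M.R) : Transitive (M.restrict S).R :=
  fun _ _ _ h₁ h₂ => ht h₁ h₂

theorem wellFounded_restrict (hwf : WellFounded (flip M.R)) :
    WellFounded (flip (M.restrict S).R) :=
  InvImage.wf Subtype.val hwf

end KModel

inductive MergeWorld (M N : KModel) : Type
  | root
  | left (w : M.W)
  | right (w : N.W)
  | chain (n : ℕ)

namespace MergeWorld

variable {M N : KModel} (e : N.W)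

def R : MergeWorld M N → MergeWorld M N → Prop
  | root, root => False
  | root, _ => True
  | left w, left w' => M.R w w'
  | right w, right w' => N.R w w'
  | chain n, chain m => m < n
  | chain _, right w => N.R e w
  | _, _ => False

def val : MergeWorld M N → ℕ → Prop
  | root, _ => False
  | left w, k => M.val w k
  | right w, k => N.val w k
  | chain _, k => N.val e k

end MergeWorld

def KModel.merge (M N : KModel) (e : N.W) : KModel :=
  ⟨MergeWorld M N, MergeWorld.R e, MergeWorld.val e⟩

namespace KModel

open MergeWorld

variable {M N : KModel} {e : N.W}

theorem merge_R_root {x : MergeWorld M N} (hx : x ≠ root) : (M.merge N e).R root x := by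
  cases x <;> first | exact absurd rfl hx | trivial

theorem force_merge_left (B : MF) (w : M.W) : (M.merge N e).force (left w) B ↔ M.force w B := by
  induction B generalizing w with
  | var n => rfl
  | fal => rfl
  | imp C D ihC ihD => exact imp_congr (ihC w) (ihD w)
  | box C ih =>
    refine ⟨fun h v hv => (ih v).1 (h (left v) hv), fun h v hv => ?_⟩
    cases v <;> first | exact (ih _).2 (h _ hv) | exact hv.elim

theorem force_merge_right (B : MF) (w : N.W) : (M.merge N e).force (right w) B ↔ N.force w B := by
  induction B generalizing w with
  | var n => rfl
  | fal => rfl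
  | imp C D ihC ihD => exact imp_congr (ihC w) (ihD w)
  | box C ih =>
    refine ⟨fun h v hv => (ih v).1 (h (right v) hv), fun h v hv => ?_⟩
    cases v <;> first | exact (ih _).2 (h _ hv) | exact hv.elim

theorem force_merge_chain {G : MF} (hRf : ∀ C, box C ∈ subF G → N.force e (imp (box C) C))
    {B : MF} (hB : B ∈ subF G) (n : ℕ) : (M.merge N e).force (chain n) B ↔ N.force e B := by
  induction B generalizing n with
  | var k => rfl
  | fal => rfl
  | imp C D ihC ihD =>
    obtain ⟨hC, hD⟩ := mem_subF_of_imp hB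
    exact imp_congr (ihC hC n) (ihD hD n)
  | box C ih =>
    have hC := mem_subF_of_box hB
    refine ⟨fun h v hv => (force_merge_right C v).1 (h (right v) hv), fun h v hv => ?_⟩
    cases v with
    | chain m => exact (ih hC m).2 (hRf C hB h)
    | right v => exact (force_merge_right C v).2 (h v hv)
    | root | left _ => exact hv.elim

theorem transitive_merge (hM : Transitive M.R) (hN : Transitive N.R) :
    Transitive (M.merge N e).R := by
  intro x y z hxy hyz
  cases x <;> cases y <;> cases z <;> simp only [merge, MergeWorld.R] at hxy hyz ⊢
  all_goals first | trivial | exact hM hxy hyz | exact hN hxy hyz | omega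

theorem wellFounded_merge (hM : WellFounded (flip M.R)) (hN : WellFounded (flip N.R)) :
    WellFounded (flip (M.merge N e).R) := by
  have hleft (w : M.W) : Acc (flip (M.merge N e).R) (left w) := by
    induction w using hM.induction with
    | _ w ih => exact ⟨_, fun v hv => by cases v <;> first | exact ih _ hv | exact hv.elim⟩
  have hright (w : N.W) : Acc (flip (M.merge N e).R) (right w) := by
    induction w using hN.induction with
    | _ w ih => exact ⟨_, fun v hv => by cases v <;> first | exact ih _ hv | exact hv.elim⟩
  have hchain (n : ℕ) : Acc (flip (M.merge N e).R) (chain n) := by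
    induction n using Nat.strong_induction_on with
    | _ n ih => exact ⟨_, fun v hv => by
        cases v <;> first | exact ih _ hv | exact hright _ | exact hv.elim⟩
  refine ⟨fun x => ⟨_, fun v hv => ?_⟩⟩
  cases v with
  | root => cases x <;> exact hv.elim
  | left w => exact hleft w
  | right w => exact hright w
  | chain n => exact hchain n

theorem force_merge_root_dian (n : ℕ) : (M.merge N e).force root (dian n top) := by
  have hchain (n : ℕ) : (M.merge N e).force (chain n) (dian n top) := by
    induction n with
    | zero => exact force_dian_zero_top _
    | succ n ih =>
      exact force_dian_succ_top
        (show (M.merge N e).R (chain (n + 1)) (chain n) from Nat.lt_succ_self n) ih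
  cases n with
  | zero => exact force_dian_zero_top _
  | succ n => exact force_dian_succ_top (merge_R_root (x := chain n) nofun) (hchain n)

theorem force_merge_root_box_box {A : MF} (hM : ∀ w, M.force w (box A))
    (hN : ∀ w, N.force w (box A)) (hRf : ∀ C, box C ∈ subF (box A) → N.force e (imp (box C) C)) :
    (M.merge N e).force root (box (box A)) := by
  intro v _
  cases v with
  | root => contradiction
  | left w => exact (force_merge_left _ w).2 (hM w)
  | right w => exact (force_merge_right _ w).2 (hN w)
  | chain n => exact (force_merge_chain hRf (mem_subF_self _) n).2 (hN e)

end KModel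

/-- if `GL ⊬ A` and `GL ⊬ ⋀Rf(□A) → ¬□A`, then there is a
transitive irreflexive Kripke model with a root forcing every `◇ⁿ⊤` and `□□A`
but not `□A`; consequently `GL_ω ⊬ □□A → □A`. -/
theorem nontrifling_of_unprovable (A : MF)
    (h1 : ¬ GLPrv A)
    (h2 : ¬ GLPrv (MF.imp (MF.conjFin (MF.RfSet (MF.box A))) (MF.neg (MF.box A)))) :
    (∃ (M : KModel) (w : M.W),
      Transitive M.R ∧ Irreflexive M.R ∧ (∀ x, x ≠ w → M.R w x) ∧
      (∀ n, M.force w (MF.dian n MF.top)) ∧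
      M.force w (MF.box (MF.box A)) ∧ ¬ M.force w (MF.box A)) ∧
    ¬ GLomegaPrv (MF.imp (MF.box (MF.box A)) (MF.box A)) := by
  obtain ⟨M, d, hMt, hMwf, hd⟩ := exists_countermodel (mt GLPrv.of_box_imp_self h1)
  obtain ⟨N, e, hNt, hNwf, he⟩ := exists_countermodel h2
  obtain ⟨hd_box, hd_A⟩ : M.force d (box A) ∧ ¬ M.force d A := Classical.not_imp.1 hd
  obtain ⟨he_Rf, he_box⟩ : N.force e (conjFin (RfSet (box A))) ∧ N.force e (box A) :=
    (Classical.not_imp.1 he).imp_right not_not.1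
  -- Keep only the worlds forcing `□A`; transitivity makes this set upward closed.
  have hM' := KModel.force_restrict (S := {w | M.force w (box A)})
    fun _ _ => KModel.force_box_of_R hMt
  have hN' := KModel.force_restrict (S := {w | N.force w (box A)})
    fun _ _ => KModel.force_box_of_R hNt
  set K := (M.restrict {w | M.force w (box A)}).merge (N.restrict {w | N.force w (box A)})
    ⟨e, he_box⟩
  have hKt : Transitive K.R :=
    KModel.transitive_merge (KModel.transitive_restrict hMt) (KModel.transitive_restrict hNt)
  have hKwf : WellFounded (flip K.R) :=
    KModel.wellFounded_merge (KModel.wellFounded_restrict hMwf) (KModel.wellFounded_restrict hNwf)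
  have hK_box_box : K.force .root (box (box A)) := KModel.force_merge_root_box_box
    (fun w => (hM' _ w).2 w.2) (fun w => (hN' _ w).2 w.2)
    (fun C hC => (hN' _ _).2 (KModel.force_of_mem_conjFin he_Rf (mem_RfSet hC)))
  have hK_box : ¬ K.force .root (box A) := fun h =>
    hd_A ((hM' A ⟨d, hd_box⟩).1 ((KModel.force_merge_left A _).1 (h _ trivial)))
  exact ⟨⟨K, .root, hKt, hKwf.irrefl.irrefl, fun _ => KModel.merge_R_root,
    KModel.force_merge_root_dian, hK_box_box, hK_box⟩,
    fun h => hK_box (h.sound hKt hKwf KModel.force_merge_root_dian hK_box_box)⟩
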